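/- arXiv:2505.22070 — 2 statements merged into one kernel-verified Lean document; each statement's English description precedes it below -/
import Mathlib

section
/- In the setting of the previous coupled ODE system, if q(t₀) = 0, then the solution component p satisfies the memory equation p'(t) = A(t) p(t) + ∫_{t₀}^t K(t,t') p(t') dt' where K(t,t') = B(t) Γ(t,t') C(t'); conversely any solution of this memory equation with p(t₀) = p₀ arises as the p-component of a solution to the coupled system with q(t₀) = 0. -/
/-!
Duhamel's formula: with `q(t₀) = 0`, the equation `q' = Cp + Dq` forces
`q(t) = ∫_{t₀}^t Γ(t,t') C(t') p(t') dt'`, and substituting this into `p' = Ap + Bq` gives the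
memory equation. Conversely, for any continuous `p` the Duhamel integral solves `q' = Cp + Dq`
with `q(t₀) = 0`, so it supplies the missing component. Uniqueness for `δ' = Dδ` comes from
`Γ(t₀,t) δ(t)` having zero derivative, which needs the derivative of `Γ` in its second variable;
that is obtained by differentiating `Γ(t₀,s) = Γ(s,t₀)⁻¹` in the Banach algebra of operators.
-/

structure IsFundamentalSolution {V : Type*} [NormedAddCommGroup V] [NormedSpace ℝ V]
    (D : ℝ → V →L[ℝ] V) (Γ : ℝ → ℝ → V →L[ℝ] V) : Prop where
  hasDerivAt_fst : ∀ s t, HasDerivAt (fun u => Γ u s) ((D t).comp (Γ t s)) t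
  self_eq_one : ∀ s, Γ s s = 1
  comp_eq : ∀ t t' t₀, (Γ t t').comp (Γ t' t₀) = Γ t t₀

namespace IsFundamentalSolution

variable {V : Type*} [NormedAddCommGroup V] [NormedSpace ℝ V]
  {D : ℝ → V →L[ℝ] V} {Γ : ℝ → ℝ → V →L[ℝ] V}

theorem apply_apply_swap (hΓ : IsFundamentalSolution D Γ) (t s : ℝ) (v : V) :
    Γ t s (Γ s t v) = v := by
  rw [← ContinuousLinearMap.comp_apply, hΓ.comp_eq, hΓ.self_eq_one, one_apply_eq_self]

def unit (hΓ : IsFundamentalSolution D Γ) (t s : ℝ) : (V →L[ℝ] V)ˣ where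
  val := Γ t s
  inv := Γ s t
  val_inv := by rw [ContinuousLinearMap.mul_def, hΓ.comp_eq, hΓ.self_eq_one]
  inv_val := by rw [ContinuousLinearMap.mul_def, hΓ.comp_eq, hΓ.self_eq_one]

theorem hasDerivAt_snd [CompleteSpace V] (hΓ : IsFundamentalSolution D Γ) (t₀ t : ℝ) :
    HasDerivAt (Γ t₀) (-((Γ t₀ t).comp (D t))) t := by
  have h_inv : Γ t₀ = Ring.inverse ∘ fun u => Γ u t₀ :=
    funext fun s => (Ring.inverse_unit (hΓ.unit s t₀)).symm
  have h := (hasFDerivAt_ringInverse (𝕜 := ℝ) (hΓ.unit t t₀)).comp_hasDerivAt t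
    (hΓ.hasDerivAt_fst t₀ t)
  refine (h.congr_deriv ?_).congr_of_eventuallyEq (.of_forall (congrFun h_inv))
  ext v
  simp [unit, ContinuousLinearMap.mulLeftRight_apply, hΓ.apply_apply_swap]

theorem continuous_snd [CompleteSpace V] (hΓ : IsFundamentalSolution D Γ) (t₀ : ℝ) :
    Continuous (Γ t₀) :=
  continuous_iff_continuousAt.2 fun t => (hΓ.hasDerivAt_snd t₀ t).continuousAt

theorem eq_zero_of_hasDerivAt [CompleteSpace V] (hΓ : IsFundamentalSolution D Γ) {t₀ : ℝ}
    {δ : ℝ → V} (hδ : ∀ t, HasDerivAt δ (D t (δ t)) t) (h0 : δ t₀ = 0) (t : ℝ) : δ t = 0 := by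
  have h_deriv : ∀ u, HasDerivAt (fun u => Γ t₀ u (δ u)) 0 u := fun u => by
    simpa using (hΓ.hasDerivAt_snd t₀ u).clm_apply (hδ u)
  have h_const : Γ t₀ t (δ t) = Γ t₀ t₀ (δ t₀) :=
    is_const_of_deriv_eq_zero (fun u => (h_deriv u).differentiableAt)
      (fun u => (h_deriv u).deriv) t t₀
  rw [← hΓ.apply_apply_swap t t₀ (δ t), h_const, h0, map_zero, map_zero]

theorem integral_eq_apply_integral [CompleteSpace V] (hΓ : IsFundamentalSolution D Γ)
    {g : ℝ → V} (hg : Continuous g) (t₀ u : ℝ) :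
    ∫ t' in t₀..u, Γ u t' (g t') = Γ u t₀ (∫ t' in t₀..u, Γ t₀ t' (g t')) := by
  rw [← ContinuousLinearMap.intervalIntegral_comp_comm _
    (((hΓ.continuous_snd t₀).clm_apply hg).intervalIntegrable _ _)]
  refine intervalIntegral.integral_congr fun t' _ => ?_
  simp only [← ContinuousLinearMap.comp_apply, hΓ.comp_eq]

theorem hasDerivAt_duhamel [CompleteSpace V] (hΓ : IsFundamentalSolution D Γ)
    {g : ℝ → V} (hg : Continuous g) (t₀ t : ℝ) :
    HasDerivAt (fun u => ∫ t' in t₀..u, Γ u t' (g t'))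
      (g t + D t (∫ t' in t₀..t, Γ t t' (g t'))) t := by
  have hg' : Continuous fun t' => Γ t₀ t' (g t') := (hΓ.continuous_snd t₀).clm_apply hg
  have h_integral : HasDerivAt (fun u => ∫ t' in t₀..u, Γ t₀ t' (g t')) (Γ t₀ t (g t)) t :=
    intervalIntegral.integral_hasDerivAt_right (hg'.intervalIntegrable _ _)
      (hg'.stronglyMeasurableAtFilter _ _) hg'.continuousAt
  simp only [hΓ.integral_eq_apply_integral hg t₀]
  convert (hΓ.hasDerivAt_fst t₀ t).clm_apply h_integral using 1
  rw [hΓ.apply_apply_swap, ContinuousLinearMap.comp_apply, add_comm]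

theorem eq_duhamel_of_hasDerivAt [CompleteSpace V] (hΓ : IsFundamentalSolution D Γ)
    {g q : ℝ → V} (hg : Continuous g) {t₀ : ℝ} (hq : ∀ t, HasDerivAt q (g t + D t (q t)) t)
    (hq0 : q t₀ = 0) (t : ℝ) : q t = ∫ t' in t₀..t, Γ t t' (g t') := by
  refine sub_eq_zero.1 (hΓ.eq_zero_of_hasDerivAt
    (t₀ := t₀) (δ := fun u => q u - ∫ t' in t₀..u, Γ u t' (g t')) (fun u => ?_) (by simp [hq0]) t)
  refine ((hq u).sub (hΓ.hasDerivAt_duhamel hg t₀ u)).congr_deriv ?_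
  rw [map_sub]
  abel

end IsFundamentalSolution

theorem memory_equation_equiv_general {Vp Vq : Type*}
    [NormedAddCommGroup Vp] [NormedSpace ℝ Vp] [FiniteDimensional ℝ Vp]
    [NormedAddCommGroup Vq] [NormedSpace ℝ Vq] [FiniteDimensional ℝ Vq]
    (A : ℝ → Vp →L[ℝ] Vp) (B : ℝ → Vq →L[ℝ] Vp)
    (C : ℝ → Vp →L[ℝ] Vq) (D : ℝ → Vq →L[ℝ] Vq)
    (hC : Continuous C)
    (Γ : ℝ → ℝ → Vq →L[ℝ] Vq)
    (hΓderiv : ∀ s t, HasDerivAt (fun u => Γ u s) ((D t).comp (Γ t s)) t)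
    (hΓinit : ∀ s, Γ s s = 1)
    (hΓcocycle : ∀ t t' t₀, (Γ t t').comp (Γ t' t₀) = Γ t t₀)
    (t₀ : ℝ) :
    (∀ (p : ℝ → Vp) (q : ℝ → Vq),
      (∀ t, HasDerivAt p (A t (p t) + B t (q t)) t) →
      (∀ t, HasDerivAt q (C t (p t) + D t (q t)) t) →
      q t₀ = 0 →
      ∀ t, HasDerivAt p (A t (p t) + ∫ t' in t₀..t, B t (Γ t t' (C t' (p t')))) t) ∧
    (∀ (p₀ : Vp) (p : ℝ → Vp), p t₀ = p₀ →
      (∀ t, HasDerivAt p (A t (p t) + ∫ t' in t₀..t, B t (Γ t t' (C t' (p t')))) t) →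
      ∃ q : ℝ → Vq, q t₀ = 0 ∧
        (∀ t, HasDerivAt p (A t (p t) + B t (q t)) t) ∧
        (∀ t, HasDerivAt q (C t (p t) + D t (q t)) t)) := by
  have hΓ : IsFundamentalSolution D Γ := ⟨hΓderiv, hΓinit, hΓcocycle⟩
  have memory_term : ∀ p : ℝ → Vp, Continuous p → ∀ t,
      ∫ t' in t₀..t, B t (Γ t t' (C t' (p t'))) = B t (∫ t' in t₀..t, Γ t t' (C t' (p t'))) :=
    fun p hp t => (B t).intervalIntegral_comp_comm
      (((hΓ.continuous_snd t).clm_apply (hC.clm_apply hp)).intervalIntegrable _ _)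
  refine ⟨fun p q hp hq hq0 t => ?_, fun p₀ p _ hp => ?_⟩
  · have hp_cont : Continuous p := continuous_iff_continuousAt.2 fun u => (hp u).continuousAt
    rw [memory_term p hp_cont, ← hΓ.eq_duhamel_of_hasDerivAt (hC.clm_apply hp_cont) hq hq0]
    exact hp t
  · have hp_cont : Continuous p := continuous_iff_continuousAt.2 fun u => (hp u).continuousAt
    refine ⟨fun u => ∫ t' in t₀..u, Γ u t' (C t' (p t')), intervalIntegral.integral_same, fun t => ?_,
      hΓ.hasDerivAt_duhamel (hC.clm_apply hp_cont) t₀⟩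
    rw [← memory_term p hp_cont]
    exact hp t

/-- Memory equation: with `q(t₀) = 0`, the `p`-component of the coupled system
`p' = Ap + Bq`, `q' = Cp + Dq` satisfies
`p'(t) = A(t) p(t) + ∫_{t₀}^t K(t,t') p(t') dt'` with `K(t,t') = B(t) Γ(t,t') C(t')`;
conversely, any solution of the memory equation with `p(t₀) = p₀` arises as the
`p`-component of a solution of the coupled system with `q(t₀) = 0`. -/
theorem memory_equation_equiv {Vp Vq : Type*}
    [NormedAddCommGroup Vp] [NormedSpace ℝ Vp] [FiniteDimensional ℝ Vp]
    [NormedAddCommGroup Vq] [NormedSpace ℝ Vq] [FiniteDimensional ℝ Vq]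
    (A : ℝ → Vp →L[ℝ] Vp) (B : ℝ → Vq →L[ℝ] Vp)
    (C : ℝ → Vp →L[ℝ] Vq) (D : ℝ → Vq →L[ℝ] Vq)
    (hA : Continuous A) (hB : Continuous B) (hC : Continuous C) (hD : Continuous D)
    (Γ : ℝ → ℝ → Vq →L[ℝ] Vq)
    (hΓderiv : ∀ s t, HasDerivAt (fun u => Γ u s) ((D t).comp (Γ t s)) t)
    (hΓinit : ∀ s, Γ s s = 1)
    (hΓcocycle : ∀ t t' t₀, (Γ t t').comp (Γ t' t₀) = Γ t t₀)
    (t₀ : ℝ) :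
    (∀ (p : ℝ → Vp) (q : ℝ → Vq),
      (∀ t, HasDerivAt p (A t (p t) + B t (q t)) t) →
      (∀ t, HasDerivAt q (C t (p t) + D t (q t)) t) →
      q t₀ = 0 →
      ∀ t, HasDerivAt p (A t (p t) + ∫ t' in t₀..t, B t (Γ t t' (C t' (p t')))) t) ∧
    (∀ (p₀ : Vp) (p : ℝ → Vp), p t₀ = p₀ →
      (∀ t, HasDerivAt p (A t (p t) + ∫ t' in t₀..t, B t (Γ t t' (C t' (p t')))) t) →
      ∃ q : ℝ → Vq, q t₀ = 0 ∧
        (∀ t, HasDerivAt p (A t (p t) + B t (q t)) t) ∧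
        (∀ t, HasDerivAt q (C t (p t) + D t (q t)) t)) :=
  memory_equation_equiv_general A B C D hC Γ hΓderiv hΓinit hΓcocycle t₀
end

section
/- Let 𝓛 be a Lindblad generator on L(h_sa), P a projection superoperator preserving Tr_{h_a}, Q = I − P, and suppose ρ solves ρ̇ = 𝓛ρ with Qρ(t₀) = 0. Let Γ(t,s) denote the fundamental solution of the linear equation v' = 𝓛^{qq}(t) v on the range of Q. Then p(t) := Pρ(t) satisfies the Nakajima–Zwanzig equation ṗ(t) = 𝓛(t)^{pp} p(t) + ∫_{t₀}^t 𝓛(t)^{pq} Γ(t,t') 𝓛(t')^{qp} p(t') dt'. -/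
open intervalIntegral Set

/-!
Write `Q = 1 - P` and `A(t) = Q 𝓛(t) Q`. Since `P` is idempotent, `q = Qρ` solves
`q' = A q + Q 𝓛 P ρ` with `q(t₀) = 0`, so Duhamel's formula gives
`q(t) = ∫_{t₀}^t Γ(t,t') Q 𝓛(t') P ρ(t') dt'`. Inserting this into `(Pρ)' = P𝓛Pρ + P𝓛q` yields
the equation; the extra `Q` in front of `Γ` is harmless because `QA = A` makes `Γ` preserve the
range of `Q`.

Duhamel's formula holds because `s ↦ Γ(t,s) q(s) - ∫_{t₀}^s Γ(t,r) f(r) dr` has zero derivative,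
using `∂_s Γ(t,s) = -Γ(t,s) A(s)`. That derivative comes from `Γ(t,s) = Γ(s,t)⁻¹`, a consequence of
the cocycle identity `Γ(t,s) Γ(s,r) = Γ(t,r)`, which in turn follows from uniqueness of solutions
of linear ODEs with continuous coefficients.
-/

theorem ODE_linear_solution_eq_zero {E : Type*} [NormedAddCommGroup E] [NormedSpace ℝ E]
    {B : ℝ → E →L[ℝ] E} (hB : Continuous B) {y : ℝ → E}
    (hy : ∀ t, HasDerivAt y (B t (y t)) t) {a : ℝ} (ha : y a = 0) (t : ℝ) : y t = 0 := by
  obtain ⟨C, hC⟩ := isCompact_Icc.exists_bound_of_continuousOn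
    (hB.continuousOn (s := Icc (min a t - 1) (max a t + 1)))
  have hlip : ∀ u ∈ Ioo (min a t - 1) (max a t + 1),
      LipschitzOnWith C.toNNReal (fun x => B u x) univ := fun u hu =>
    ((B u).lipschitz.weaken <| by
      simpa [← norm_toNNReal] using Real.toNNReal_le_toNNReal (hC u (Ioo_subset_Icc_self hu))
      ).lipschitzOnWith
  have hmem : a ∈ Ioo (min a t - 1) (max a t + 1) :=
    ⟨by linarith [min_le_left a t], by linarith [le_max_left a t]⟩
  have hzero : ∀ u ∈ Ioo (min a t - 1) (max a t + 1),
      HasDerivAt (fun _ => (0 : E)) (B u 0) u := fun u _ => by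
    simpa using hasDerivAt_const u (0 : E)
  exact ODE_solution_unique_of_mem_Icc hlip hmem
    (HasDerivAt.continuousOn fun u _ => hy u) (fun u _ => hy u) (fun _ _ => trivial)
    continuousOn_const hzero (fun _ _ => trivial) ha
    ⟨by linarith [min_le_right a t], by linarith [le_max_right a t]⟩

section

variable {V : Type*} [NormedAddCommGroup V] [NormedSpace ℝ V]

structure IsPropagator (A : ℝ → V →L[ℝ] V) (Γ : ℝ → ℝ → V →L[ℝ] V) : Prop where
  hasDerivAt : ∀ s t, HasDerivAt (fun u => Γ u s) (A t * Γ t s) t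
  self : ∀ s, Γ s s = 1

namespace IsPropagator

variable {A : ℝ → V →L[ℝ] V} {Γ : ℝ → ℝ → V →L[ℝ] V}

theorem mul_eq (hΓ : IsPropagator A Γ) (hA : Continuous A) (t s r : ℝ) :
    Γ t s * Γ s r = Γ t r := by
  have hB : Continuous fun u => ContinuousLinearMap.mul ℝ (V →L[ℝ] V) (A u) :=
    (ContinuousLinearMap.mul ℝ _).continuous.comp hA
  have hy : ∀ u, HasDerivAt (fun u => Γ u s * Γ s r - Γ u r)
      (ContinuousLinearMap.mul ℝ _ (A u) (Γ u s * Γ s r - Γ u r)) u := fun u => by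
    refine (((hΓ.hasDerivAt s u).mul_const (Γ s r)).fun_sub (hΓ.hasDerivAt r u)).congr_deriv ?_
    simp [mul_sub, mul_assoc]
  exact sub_eq_zero.mp <| ODE_linear_solution_eq_zero hB hy (a := s) (by simp [hΓ.self]) t

theorem mul_swap_eq_one (hΓ : IsPropagator A Γ) (hA : Continuous A) (t s : ℝ) :
    Γ t s * Γ s t = 1 := by
  rw [hΓ.mul_eq hA, hΓ.self]

theorem hasDerivAt_right [CompleteSpace V] (hΓ : IsPropagator A Γ) (hA : Continuous A)
    (t u : ℝ) : HasDerivAt (Γ t) (-(Γ t u * A u)) u := by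
  let U : ℝ → (V →L[ℝ] V)ˣ := fun w =>
    ⟨Γ w t, Γ t w, hΓ.mul_swap_eq_one hA w t, hΓ.mul_swap_eq_one hA t w⟩
  have hinv : Γ t = fun w => Ring.inverse (Γ w t) := funext fun w => (Ring.inverse_unit (U w)).symm
  rw [hinv]
  refine ((hasFDerivAt_ringInverse (U u)).comp_hasDerivAt u (hΓ.hasDerivAt t u)).congr_deriv ?_
  simp [U, mul_assoc, hΓ.mul_swap_eq_one hA u t, ← congrFun hinv u]

theorem continuous_right [CompleteSpace V] (hΓ : IsPropagator A Γ) (hA : Continuous A) (t : ℝ) :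
    Continuous (Γ t) :=
  continuous_iff_continuousAt.mpr fun u => (hΓ.hasDerivAt_right hA t u).continuousAt

theorem eq_integral_of_hasDerivAt [CompleteSpace V] (hΓ : IsPropagator A Γ) (hA : Continuous A)
    {q f : ℝ → V} (hf : Continuous f) (hq : ∀ t, HasDerivAt q (A t (q t) + f t) t) {t₀ : ℝ}
    (hq₀ : q t₀ = 0) (t : ℝ) : q t = ∫ r in t₀..t, Γ t r (f r) := by
  have hg : Continuous fun r => Γ t r (f r) := (hΓ.continuous_right hA t).clm_apply hf
  have hy : ∀ s, HasDerivAt (fun s => Γ t s (q s) - ∫ r in t₀..s, Γ t r (f r)) 0 s := fun s => by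
    refine (((hΓ.hasDerivAt_right hA t s).clm_apply (hq s)).fun_sub
      (integral_hasDerivAt_right (hg.intervalIntegrable t₀ s)
        (hg.stronglyMeasurableAtFilter _ _) hg.continuousAt)).congr_deriv ?_
    simp
  have := is_const_of_deriv_eq_zero (fun s => (hy s).differentiableAt) (fun s => (hy s).deriv) t t₀
  simpa [hΓ.self, hq₀, sub_eq_zero] using this

theorem apply_apply_eq_of_mul_eq {Q : V →L[ℝ] V} (hΓ : IsPropagator A Γ)
    (hQ : IsIdempotentElem Q) (hQA : ∀ u, Q * A u = A u) (t s : ℝ) (x : V) :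
    Q (Γ t s (Q x)) = Γ t s (Q x) := by
  have hy : ∀ u, HasDerivAt (fun u => Q * Γ u s * Q - Γ u s * Q) 0 u := fun u => by
    refine ((((hΓ.hasDerivAt s u).const_mul Q).mul_const Q).fun_sub
      ((hΓ.hasDerivAt s u).mul_const Q)).congr_deriv ?_
    rw [← mul_assoc, hQA, sub_self]
  have := is_const_of_deriv_eq_zero (fun u => (hy u).differentiableAt) (fun u => (hy u).deriv) t s
  simp only [hΓ.self, mul_one, one_mul, hQ.eq, sub_self, sub_eq_zero] at this
  exact congr($this x)

end IsPropagator

end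

/-- Nakajima–Zwanzig equation: if `ρ' = 𝓛(t)ρ` with `Qρ(t₀) = 0` and `Γ` the fundamental
solution of `v' = 𝓛^{qq}(t) v`, then `p = Pρ` satisfies
`p'(t) = 𝓛(t)^{pp} p(t) + ∫_{t₀}^t 𝓛(t)^{pq} Γ(t,t') 𝓛(t')^{qp} p(t') dt'`. -/
theorem nakajima_zwanzig {V : Type*} [NormedAddCommGroup V] [NormedSpace ℝ V]
    [FiniteDimensional ℝ V]
    (𝓛 : ℝ → V →L[ℝ] V) (h𝓛 : Continuous 𝓛)
    (P : V →L[ℝ] V) (hP : P.comp P = P)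
    (Γ : ℝ → ℝ → V →L[ℝ] V)
    (hΓderiv : ∀ s t, HasDerivAt (fun u => Γ u s)
      ((((1 - P).comp ((𝓛 t).comp (1 - P))).comp (Γ t s))) t)
    (hΓinit : ∀ s, Γ s s = 1)
    (t₀ : ℝ) (ρ : ℝ → V)
    (hρ : ∀ t, HasDerivAt ρ (𝓛 t (ρ t)) t)
    (hq0 : ρ t₀ - P (ρ t₀) = 0) :
    ∀ t, HasDerivAt (fun u => P (ρ u))
      (P (𝓛 t (P (ρ t))) +
        ∫ t' in t₀..t,
          P (𝓛 t ((1 - P) ((Γ t t') ((1 - P) (𝓛 t' (P (ρ t')))))))) t := by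
  intro t
  set Q := 1 - P
  have hQ : IsIdempotentElem Q := IsIdempotentElem.one_sub hP
  have hQQ : ∀ x, Q (Q x) = Q x := fun x => congr($(hQ.eq) x)
  have hsplit : ∀ x, x = P x + Q x := by simp [Q]
  have hΓ : IsPropagator (fun u => Q * (𝓛 u * Q)) Γ := ⟨hΓderiv, hΓinit⟩
  have hA : Continuous fun u => Q * (𝓛 u * Q) := by fun_prop
  have hρc : Continuous ρ := continuous_iff_continuousAt.mpr fun u => (hρ u).continuousAt
  have hf : Continuous fun u => Q (𝓛 u (P (ρ u))) := by fun_prop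
  have hq : ∀ u, HasDerivAt (fun u => Q (ρ u))
      ((Q * (𝓛 u * Q)) (Q (ρ u)) + Q (𝓛 u (P (ρ u)))) u := fun u => by
    refine (Q.hasFDerivAt.comp_hasDerivAt u (hρ u)).congr_deriv ?_
    conv_lhs => rw [hsplit (ρ u)]
    simp [hQQ, add_comm]
  have hq₀ : Q (ρ t₀) = 0 := by simpa [Q] using hq0
  have hQA : ∀ u, Q * (Q * (𝓛 u * Q)) = Q * (𝓛 u * Q) := fun u => by rw [← mul_assoc, hQ.eq]
  have hint := ((hΓ.continuous_right hA t).clm_apply hf).intervalIntegrable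
    (μ := MeasureTheory.volume) t₀ t
  refine (P.hasFDerivAt.comp_hasDerivAt t (hρ t)).congr_deriv ?_
  calc P (𝓛 t (ρ t)) = P (𝓛 t (P (ρ t))) + P (𝓛 t (Q (ρ t))) := by
        rw [← map_add, ← map_add, ← hsplit]
    _ = P (𝓛 t (P (ρ t))) + ∫ r in t₀..t, P (𝓛 t (Γ t r (Q (𝓛 r (P (ρ r)))))) := by
        rw [hΓ.eq_integral_of_hasDerivAt hA hf hq hq₀ t]
        exact congrArg _ ((P.comp (𝓛 t)).intervalIntegral_comp_comm hint).symm
    _ = _ := by simp only [hΓ.apply_apply_eq_of_mul_eq hQ hQA]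
end
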